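/- arXiv:1803.06047 — 2 statements merged into one kernel-verified Lean document; each statement's English description precedes it below -/
import Mathlib

section
/- For every real number θ with 1/2 ≤ θ ≤ 3/2 and all real numbers a, b, c, the implicit approximation χ_θ = [θ(5/2 − θ) − 1/2]·a + 2(1−θ)²·b + (θ − 1/2)(1−θ)·c satisfies the inequality χ_θ · [(θ + 1/2)a − 2θb + (θ − 1/2)c] ≥ (1/2)(3/2 − θ)·(a² − b²) + (1/2)(θ − 1/2)·((2a − b)² − (2b − c)²). -/
/-!
The product `χ_θ · [(θ + 1/2)a − 2θb + (θ − 1/2)c]` equals the right-hand side exactly, plus the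
numerical dissipation `(1/2)θ(θ − 1/2)(3 − 2θ)(a − 2b + c)²`, whose coefficient is nonnegative
for `θ ∈ [1/2, 3/2]`.
-/

/-- The second-order implicit approximation `χ_θ` of `χ` at step `n + θ`, from
`a = χ^{n+1}`, `b = χ^n`, `c = χ^{n-1}`. -/
noncomputable def implicitApprox (θ a b c : ℝ) : ℝ :=
  (θ * (5/2 - θ) - 1/2) * a + 2 * (1 - θ)^2 * b + (θ - 1/2) * (1 - θ) * c

theorem implicitApprox_mul_eq (θ a b c : ℝ) :
    implicitApprox θ a b c * ((θ + 1/2) * a - 2 * θ * b + (θ - 1/2) * c)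
      = (1/2) * (3/2 - θ) * (a^2 - b^2) + (1/2) * (θ - 1/2) * ((2*a - b)^2 - (2*b - c)^2)
        + (1/2) * θ * (θ - 1/2) * (3 - 2*θ) * (a - 2*b + c)^2 := by
  unfold implicitApprox
  ring

theorem dissipation_coeff_nonneg {θ : ℝ} (hθ1 : 1/2 ≤ θ) (hθ2 : θ ≤ 3/2) :
    0 ≤ (1/2) * θ * (θ - 1/2) * (3 - 2*θ) := by
  have h₀ : 0 ≤ θ := by linarith
  have h₁ : 0 ≤ θ - 1/2 := by linarith
  have h₂ : 0 ≤ 3 - 2*θ := by linarith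
  positivity

theorem product_inequality_implicit_approximation (θ a b c : ℝ)
    (hθ1 : 1/2 ≤ θ) (hθ2 : θ ≤ 3/2) :
    ((θ * (5/2 - θ) - 1/2) * a + 2 * (1 - θ)^2 * b + (θ - 1/2) * (1 - θ) * c) *
      ((θ + 1/2) * a - 2 * θ * b + (θ - 1/2) * c)
    ≥ (1/2) * (3/2 - θ) * (a^2 - b^2)
      + (1/2) * (θ - 1/2) * ((2*a - b)^2 - (2*b - c)^2) := by
  rw [← implicitApprox, implicitApprox_mul_eq]
  exact le_add_of_nonneg_right
    (mul_nonneg (dissipation_coeff_nonneg hθ1 hθ2) (sq_nonneg _))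
end

section
/- Let χ : ℝ → ℝ be twice continuously differentiable, let t ∈ ℝ and θ ∈ ℝ. Then the function Δt ↦ [θ(5/2 − θ) − 1/2]·χ(t + Δt) + 2(1 − θ)²·χ(t) + (θ − 1/2)(1 − θ)·χ(t − Δt) − χ(t + θΔt) is O(Δt²) as Δt → 0. In other words, the implicit approximation χ^{n+θ} = [θ(5/2−θ)−1/2]χ^{n+1} + 2(1−θ)²χ^n + (θ−1/2)(1−θ)χ^{n−1} is second-order accurate in time. -/
open Topology Asymptotics

section

variable {E : Type*} [NormedAddCommGroup E] [NormedSpace ℝ E]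

theorem ContDiff.isBigO_sub_sub_smul_deriv {f : ℝ → E} (hf : ContDiff ℝ 2 f) (x₀ : ℝ) :
    (fun x => f x - f x₀ - (x - x₀) • deriv f x₀) =O[𝓝 x₀] fun x => (x - x₀) ^ 2 := by
  set w : E := (2 : ℝ)⁻¹ • iteratedDeriv 2 f x₀
  have hquad : (fun x => (x - x₀) ^ 2 • w) =O[𝓝 x₀] fun x => (x - x₀) ^ 2 :=
    .of_bound ‖w‖ (.of_forall fun x => by rw [norm_smul, mul_comm])
  refine ((taylor_isLittleO_univ hf).isBigO.add hquad).congr_left fun x => ?_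
  simp only [taylorWithinEval_succ, taylor_within_zero_eval, iteratedDerivWithin_univ, w]
  norm_num
  module

theorem ContDiff.isBigO_sub_sub_smul_deriv_comp_add_mul {f : ℝ → E} (hf : ContDiff ℝ 2 f)
    (x₀ c : ℝ) :
    (fun h => f (x₀ + c * h) - f x₀ - (c * h) • deriv f x₀) =O[𝓝 0] fun h => h ^ 2 := by
  have hlim : Filter.Tendsto (fun h : ℝ => x₀ + c * h) (𝓝 0) (𝓝 x₀) := by
    simpa using ((continuous_const_mul c).const_add x₀).tendsto 0
  have hsq : (fun h => (x₀ + c * h - x₀) ^ 2) =O[𝓝 (0 : ℝ)] fun h => h ^ 2 :=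
    ((isBigO_refl _ _).const_mul_left (c ^ 2)).congr_left fun h => by ring
  exact ((hf.isBigO_sub_sub_smul_deriv x₀).comp_tendsto hlim).trans hsq
    |>.congr_left fun h => by simp

end

theorem implicit_approximation_second_order
    (χ : ℝ → ℝ) (hχ : ContDiff ℝ 2 χ) (t θ : ℝ) :
    (fun Δt : ℝ =>
        (θ * (5/2 - θ) - 1/2) * χ (t + Δt) + 2 * (1 - θ)^2 * χ t
          + (θ - 1/2) * (1 - θ) * χ (t - Δt) - χ (t + θ * Δt))
      =O[𝓝 (0 : ℝ)] fun Δt : ℝ => Δt ^ 2 := by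
  have hforward := hχ.isBigO_sub_sub_smul_deriv_comp_add_mul t 1
  have hbackward := hχ.isBigO_sub_sub_smul_deriv_comp_add_mul t (-1)
  have hθ := hχ.isBigO_sub_sub_smul_deriv_comp_add_mul t θ
  simp only [one_mul, neg_one_mul, ← sub_eq_add_neg] at hforward hbackward
  -- The weights sum to `1` and have first moment `θ`: the Taylor terms of order 0 and 1 cancel.
  refine (((hforward.const_mul_left (θ * (5/2 - θ) - 1/2)).add
    (hbackward.const_mul_left ((θ - 1/2) * (1 - θ)))).sub hθ).congr_left fun Δt => ?_
  simp only [smul_eq_mul]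
  ring
end
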